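/- (Five-term identity of Schützenberger, Faddeev–Kashaev, Faddeev–Volkov.) In the algebra R₁ (the model of K_q[[x,y]] with x·y = q·y·x), the quantum dilogarithm satisfies Φ(x) * Φ(y) = Φ(y) * Φ(−q^{−1/2}·x*y) * Φ(x). -/

import Mathlib

set_option maxRecDepth 4000


noncomputable section

open Finset

/-- Antidiagonal structure on `ℕ × ℕ`. -/
instance : Finset.HasAntidiagonal (ℕ × ℕ) where
  antidiagonal p :=
    (Finset.HasAntidiagonal.antidiagonal p.1 ×ˢ Finset.HasAntidiagonal.antidiagonal p.2).map
      ⟨fun x => ((x.1.1, x.2.1), (x.1.2, x.2.2)), by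
        rintro ⟨⟨a, b⟩, ⟨c, d⟩⟩ ⟨⟨a', b'⟩, ⟨c', d'⟩⟩ h
        simp only [Prod.mk.injEq] at h
        obtain ⟨⟨h1, h2⟩, h3, h4⟩ := h
        simp_all⟩
  mem_antidiagonal := by
    rintro ⟨c, d⟩ ⟨⟨a, b⟩, ⟨a', b'⟩⟩
    simp only [Finset.mem_map, Finset.mem_product, Finset.HasAntidiagonal.mem_antidiagonal,
      Function.Embedding.coeFn_mk, Prod.mk.injEq, Prod.ext_iff]
    constructor
    · rintro ⟨⟨⟨u, v⟩, ⟨w, z⟩⟩, ⟨h1, h2⟩, h⟩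
      simp only [Function.Embedding.coeFn_mk, Prod.mk.injEq] at h h1 h2 ⊢
      obtain ⟨⟨e1, e2⟩, e3, e4⟩ := h
      subst e1; subst e2; subst e3; subst e4
      simp only [Prod.fst_add, Prod.snd_add]
      exact ⟨h1, h2⟩
    · rintro ⟨h1, h2⟩
      exact ⟨⟨⟨a, a'⟩, ⟨b, b'⟩⟩, ⟨h1, h2⟩, by and_intros <;> rfl⟩

/-- `K = ℚ(q^{1/2})`, the field of rational functions over `ℚ` in the variable `q^{1/2}`. -/
abbrev K : Type := RatFunc ℚ

/-- The generator `q^{1/2}` of `K`. -/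
def sqrtq : K := RatFunc.X

/-- `q = (q^{1/2})²`. -/
def qvar : K := sqrtq ^ 2

/-- `Rm m` is the `K`-algebra of all functions `f : ℕ×ℕ → K` with the twisted
convolution product `(f*g)(c,d) = ∑_{a+a'=c, b+b'=d} q^{m·a·b'}·f(a,b)·g(a',b')`;
it is a concrete model of the skew power series ring `K_{q^m}[[x,y]]` with
`x·y = q^m·y·x`. -/
def Rm (_m : ℕ) : Type := ℕ × ℕ → K

namespace Rm

variable {m : ℕ}

instance : AddCommGroup (Rm m) := Pi.addCommGroup
instance : Module K (Rm m) := Pi.module _ _ _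

instance : One (Rm m) := ⟨fun p => if p = (0, 0) then 1 else 0⟩

instance : Mul (Rm m) :=
  ⟨fun f g p => ∑ u ∈ Finset.HasAntidiagonal.antidiagonal p, qvar ^ (m * u.1.1 * u.2.2) * f u.1 * g u.2⟩

theorem mul_def (f g : Rm m) (p : ℕ × ℕ) :
    (f * g) p = ∑ u ∈ Finset.HasAntidiagonal.antidiagonal p, qvar ^ (m * u.1.1 * u.2.2) * f u.1 * g u.2 :=
  rfl

theorem one_def (p : ℕ × ℕ) : (1 : Rm m) p = if p = (0, 0) then 1 else 0 := rfl


theorem add_apply (f g : Rm m) (p : ℕ × ℕ) : (f + g) p = f p + g p := rfl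

theorem zero_apply (p : ℕ × ℕ) : (0 : Rm m) p = 0 := rfl

theorem smul_apply (a : K) (f : Rm m) (p : ℕ × ℕ) : (a • f) p = a * f p := rfl

protected theorem mul_assoc' (f g h : Rm m) : f * g * h = f * (g * h) := by
  funext p
  simp only [mul_def, Finset.sum_mul, Finset.mul_sum, Finset.sum_sigma']
  apply Finset.sum_nbij' (i := fun x => ⟨(x.2.1, x.2.2 + x.1.2), (x.2.2, x.1.2)⟩)
    (j := fun x => ⟨(x.1.1 + x.2.1, x.2.2), (x.1.1, x.2.1)⟩) <;>
    rintro ⟨⟨u₁, u₂⟩, ⟨w₁, w₂⟩⟩ hx <;>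
    simp only [Finset.mem_sigma, Finset.HasAntidiagonal.mem_antidiagonal, Prod.ext_iff] at hx ⊢ <;>
    obtain ⟨h1, h2⟩ := hx
  · refine ⟨⟨?_, ?_⟩, trivial⟩ <;> simp [Prod.fst_add, Prod.snd_add] at h1 h2 ⊢ <;> omega
  · refine ⟨⟨?_, ?_⟩, trivial⟩ <;> simp [Prod.fst_add, Prod.snd_add] at h1 h2 ⊢ <;> omega
  · have e : w₁ + w₂ = u₁ := Prod.ext_iff.mpr h2
    subst e; rfl
  · have e : w₁ + w₂ = u₂ := Prod.ext_iff.mpr h2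
    subst e; rfl
  · have e : w₁ + w₂ = u₁ := Prod.ext_iff.mpr h2
    subst e
    simp only [Prod.fst_add, Prod.snd_add]
    rw [show m * (w₁.1 + w₂.1) * u₂.2 = m * w₁.1 * u₂.2 + m * w₂.1 * u₂.2 by ring,
      show m * w₁.1 * (w₂.2 + u₂.2) = m * w₁.1 * w₂.2 + m * w₁.1 * u₂.2 by ring,
      pow_add, pow_add]
    ring

protected theorem one_mul' (f : Rm m) : 1 * f = f := by
  funext p
  rw [mul_def]
  rw [Finset.sum_eq_single ((0, 0), p)]
  · simp [one_def]
  · rintro ⟨u, v⟩ hb hne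
    simp only [Finset.HasAntidiagonal.mem_antidiagonal] at hb
    rcases eq_or_ne u (0, 0) with h | h
    · exact absurd (by simp [h]; rw [← hb, h]; simp) hne
    · simp only [one_def, if_neg h]
      ring
  · intro habs
    exact absurd (by simp [Finset.HasAntidiagonal.mem_antidiagonal]) habs

protected theorem mul_one' (f : Rm m) : f * 1 = f := by
  funext p
  rw [mul_def]
  rw [Finset.sum_eq_single (p, (0, 0))]
  · simp [one_def]
  · rintro ⟨u, v⟩ hb hne
    simp only [Finset.HasAntidiagonal.mem_antidiagonal] at hb
    rcases eq_or_ne v (0, 0) with h | h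
    · exact absurd (by simp [h]; rw [← hb, h]; simp) hne
    · simp only [one_def, if_neg h]
      ring
  · intro habs
    exact absurd (by simp [Finset.HasAntidiagonal.mem_antidiagonal]) habs

protected theorem left_distrib' (f g h : Rm m) : f * (g + h) = f * g + f * h := by
  funext p
  simp only [mul_def, add_apply, ← Finset.sum_add_distrib]
  exact Finset.sum_congr rfl fun u _ => by ring

protected theorem right_distrib' (f g h : Rm m) : (f + g) * h = f * h + g * h := by
  funext p
  simp only [mul_def, add_apply, ← Finset.sum_add_distrib]
  exact Finset.sum_congr rfl fun u _ => by ring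

protected theorem zero_mul' (f : Rm m) : 0 * f = 0 := by
  funext p
  simp only [mul_def, zero_apply]
  simp

protected theorem mul_zero' (f : Rm m) : f * 0 = 0 := by
  funext p
  simp only [mul_def, zero_apply]
  simp

instance : Ring (Rm m) :=
  { (inferInstance : AddCommGroup (Rm m)) with
    mul := (· * ·)
    one := 1
    mul_assoc := Rm.mul_assoc'
    one_mul := Rm.one_mul'
    mul_one := Rm.mul_one'
    left_distrib := Rm.left_distrib'
    right_distrib := Rm.right_distrib'
    zero_mul := Rm.zero_mul'
    mul_zero := Rm.mul_zero' }


/-- The coefficient `q^{n/2}/((1−q)(1−q²)⋯(1−qⁿ))` of the quantum dilogarithm. -/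
def phiCoeff (n : ℕ) : K :=
  sqrtq ^ n * (∏ i ∈ Finset.range n, (1 - qvar ^ (i + 1)))⁻¹

/-- The element `x = δ_{(1,0)}` of `Rm m`. -/
def xGen : Rm m := fun p => if p = (1, 0) then 1 else 0

/-- The element `y = δ_{(0,1)}` of `Rm m`. -/
def yGen : Rm m := fun p => if p = (0, 1) then 1 else 0

/-- The quantum dilogarithm `Φ(z) = ∑_{n≥0} q^{n/2}·zⁿ/((1−q)⋯(1−qⁿ))` of an
element `z ∈ Rm m` with `z(0,0) = 0`; each value is a finite sum (for such `z`,
`(zⁿ)(c,d) = 0` whenever `n > c + d`). -/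
def PhiR (z : Rm m) : Rm m := fun p =>
  ∑ n ∈ Finset.range (p.1 + p.2 + 1), phiCoeff n * (z ^ n) p

/-- The geometric series `∑_{n≥0} (1 − f(0,0)⁻¹·f)ⁿ`; each value is a finite sum. -/
noncomputable def geomSeries (f : Rm m) : Rm m := fun p =>
  ∑ n ∈ Finset.range (p.1 + p.2 + 1), (((1 : Rm m) - (f (0, 0))⁻¹ • f) ^ n) p

/-- The inverse of `f ∈ Rm m` with invertible constant coefficient `f(0,0)`, given
by the geometric series `f⁻¹ = f(0,0)⁻¹·∑_{n≥0} (1 − f(0,0)⁻¹·f)ⁿ`. -/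
noncomputable instance : Inv (Rm m) := ⟨fun f => (f (0, 0))⁻¹ • geomSeries f⟩

end Rm

namespace FiveAux

lemma sqrtq_ne_zero : sqrtq ≠ 0 := RatFunc.X_ne_zero

lemma sqrtq_pow_ne_one {n : ℕ} (hn : n ≠ 0) : sqrtq ^ n ≠ 1 := by
  intro h
  have : (algebraMap (Polynomial ℚ) (RatFunc ℚ)) (Polynomial.X ^ n)
      = (algebraMap (Polynomial ℚ) (RatFunc ℚ)) 1 := by
    simpa [map_pow, RatFunc.algebraMap_X, sqrtq] using h
  have h2 := RatFunc.algebraMap_injective ℚ this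
  have := congrArg Polynomial.natDegree h2
  simp [Polynomial.natDegree_X_pow] at this
  exact hn this

lemma qvar_pow_ne_one {n : ℕ} (hn : n ≠ 0) : qvar ^ n ≠ 1 := by
  have : qvar ^ n = sqrtq ^ (2 * n) := by rw [qvar, ← pow_mul]
  rw [this]
  exact sqrtq_pow_ne_one (by omega)

/-- `P n = (1-q)(1-q²)⋯(1-qⁿ)`. -/
def P (n : ℕ) : K := ∏ i ∈ Finset.range n, (1 - qvar ^ (i + 1))

lemma P_zero : P 0 = 1 := rfl

lemma P_succ (n : ℕ) : P (n + 1) = P n * (1 - qvar ^ (n + 1)) := Finset.prod_range_succ _ _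

lemma P_ne_zero (n : ℕ) : P n ≠ 0 := by
  induction n with
  | zero => simp [P_zero]
  | succ n ih =>
    rw [P_succ]
    exact mul_ne_zero ih (sub_ne_zero.mpr (Ne.symm (qvar_pow_ne_one (by omega))))

/-- triangular numbers: tri n = n(n-1)/2 -/
def tri : ℕ → ℕ
  | 0 => 0
  | n + 1 => tri n + n

/-- Gaussian binomial via Pascal. -/
def B : ℕ → ℕ → K
  | _, 0 => 1
  | 0, _ + 1 => 0
  | c + 1, k + 1 => qvar ^ (k + 1) * B c (k + 1) + B c k

lemma B_zero_right (c : ℕ) : B c 0 = 1 := by cases c <;> rfl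

lemma B_succ_succ (c k : ℕ) :
    B (c + 1) (k + 1) = qvar ^ (k + 1) * B c (k + 1) + B c k := rfl

lemma B_eq_zero {c k : ℕ} (h : c < k) : B c k = 0 := by
  induction c generalizing k with
  | zero =>
    cases k with
    | zero => omega
    | succ k => rfl
  | succ c ih =>
    cases k with
    | zero => omega
    | succ k =>
      rw [B_succ_succ, ih (by omega), ih (by omega)]
      ring

lemma L2 (c j : ℕ) : (1 - qvar ^ (j + 1)) * B c (j + 1) = B c j * (1 - qvar ^ (c - j)) := by
  induction c generalizing j with
  | zero =>
    cases j with
    | zero => simp [B, B_zero_right]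
    | succ j => simp [B]
  | succ c ih =>
    cases j with
    | zero =>
      rw [B_succ_succ]
      have h0 := ih 0
      rw [B_zero_right] at h0
      simp only [B_zero_right]
      have e : qvar * qvar ^ c = qvar ^ (c + 1) := (pow_succ' qvar c).symm
      simp only [Nat.sub_zero] at h0 ⊢
      linear_combination qvar * h0 - e
    | succ j =>
      rcases le_or_gt (j + 1) c with hle | hlt
      · rw [B_succ_succ, B_succ_succ]
        have e3 : qvar ^ (j + 1 + 1) * qvar ^ (c - (j + 1)) = qvar ^ (c + 1) := by
          rw [← pow_add]; congr 1; omega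
        have e4 : qvar ^ (j + 1) * qvar ^ (c - j) = qvar ^ (c + 1) := by
          rw [← pow_add]; congr 1; omega
        have e5 : c + 1 - (j + 1) = c - j := by omega
        rw [e5]
        linear_combination qvar ^ (j + 1 + 1) * ih (j + 1) + ih j + B c (j + 1) * e4 - B c (j + 1) * e3
      · rw [B_succ_succ, B_eq_zero (show c < j + 1 + 1 by omega), B_eq_zero (show c < j + 1 by omega)]
        have : c + 1 - (j + 1) = 0 := by omega
        rw [this]
        simp


lemma B_diag (c : ℕ) : B c c = 1 := by
  induction c with
  | zero => rfl
  | succ c ih => rw [B_succ_succ, B_eq_zero (by omega), ih]; ring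

lemma L3 {c k : ℕ} (h : k ≤ c) : B c k * (P k * P (c - k)) = P c := by
  induction c generalizing k with
  | zero =>
    have : k = 0 := by omega
    subst this
    simp [B_zero_right, P_zero]
  | succ c ih =>
    cases k with
    | zero => simp [B_zero_right, P_zero]
    | succ k =>
      rcases le_or_gt (k + 1) c with hle | hlt
      · have ih1 := ih hle
        have ih0 := ih (show k ≤ c by omega)
        have e5 : c + 1 - (k + 1) = c - k := by omega
        have hck : c - k = (c - (k + 1)) + 1 := by omega
        have hPk : P (c - k) = P (c - (k + 1)) * (1 - qvar ^ (c - k)) := by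
          rw [hck, P_succ, ← hck]
        rw [e5, B_succ_succ, P_succ c, P_succ k]
        rw [P_succ k] at ih1
        have e7 : qvar ^ (k + 1) * qvar ^ (c - k) = qvar ^ (c + 1) := by
          rw [← pow_add]; congr 1; omega
        linear_combination qvar ^ (k + 1) * (1 - qvar ^ (c - k)) * ih1
          + (1 - qvar ^ (k + 1)) * ih0
          + qvar ^ (k + 1) * B c (k + 1) * (P k * (1 - qvar ^ (k + 1))) * hPk - P c * e7
      · have : k = c := by omega
        subst this
        simp [B_diag, P_zero]

/-- the `k`-th term of the five-term sum -/
def t (c d k : ℕ) : K := (-1) ^ k * qvar ^ (tri k) * P k * (B c k * B d k)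

/-- auxiliary term -/
def F (c d k : ℕ) : K := (-1) ^ k * qvar ^ (tri k + k) * P k * (B c k * B d k)

lemma keystep (c d j : ℕ) :
    t c (d + 1) (j + 1) = F c d (j + 1) + (qvar ^ c * t c d j - F c d j) := by
  rcases lt_or_ge c j with hlt | hle
  · simp [t, F, B_eq_zero (show c < j + 1 by omega), B_eq_zero hlt]
  · have hP : P (j + 1) * B c (j + 1) = P j * (B c j * (1 - qvar ^ (c - j))) := by
      rw [P_succ, mul_assoc, L2]
    obtain ⟨a, rfl⟩ : ∃ a, c = j + a := ⟨c - j, by omega⟩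
    rw [show j + a - j = a from by omega] at hP
    simp only [t, F, B_succ_succ, show tri (j+1) = tri j + j from rfl]
    simp only [pow_add, pow_succ]
    linear_combination ((-1 : K) ^ j * (-1) * qvar ^ (tri j) * qvar ^ j * B d j) * hP

lemma star (c d : ℕ) : (∑ k ∈ Finset.range (d + 1), t c d k) = qvar ^ (c * d) := by
  induction d with
  | zero =>
    simp [t, tri, P_zero, B_zero_right]
  | succ d ih =>
    rw [Finset.sum_range_succ' (fun k => t c (d+1) k) (d+1)]
    have ht0 : t c (d + 1) 0 = 1 := by simp [t, tri, P_zero, B_zero_right]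
    have hF0 : F c d 0 = 1 := by simp [F, tri, P_zero, B_zero_right]
    have hFd : F c d (d + 1) = 0 := by
      simp [F, B_eq_zero (show d < d + 1 by omega)]
    simp only [keystep]
    rw [Finset.sum_add_distrib, Finset.sum_sub_distrib, ← Finset.mul_sum, ih]
    have h1 : ∑ j ∈ Finset.range (d + 1), F c d (j + 1)
        = (∑ k ∈ Finset.range (d + 2), F c d k) - F c d 0 := by
      rw [Finset.sum_range_succ' (fun k => F c d k) (d+1)]
      ring
    have h2 : ∑ j ∈ Finset.range (d + 1), F c d j
        = (∑ k ∈ Finset.range (d + 2), F c d k) - F c d (d + 1) := by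
      rw [Finset.sum_range_succ (fun k => F c d k) (d+1)]
      ring
    rw [h1, h2, hF0, hFd, ht0]
    rw [← pow_add, show c + c * d = c * (d + 1) from by ring]
    ring

end FiveAux

section Algebra
open Rm FiveAux

lemma phiCoeff_eq (n : ℕ) : phiCoeff n = sqrtq ^ n * (P n)⁻¹ := rfl

/-- delta function with value `v` at `(a, b)` -/
def dd {m : ℕ} (a b : ℕ) (v : K) : Rm m := fun p => if p = (a, b) then v else 0

lemma sum_antidiag (p : ℕ × ℕ) (f : (ℕ × ℕ) × (ℕ × ℕ) → K) :
    ∑ u ∈ Finset.HasAntidiagonal.antidiagonal p, f u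
      = ∑ x ∈ Finset.HasAntidiagonal.antidiagonal p.1, ∑ y ∈ Finset.HasAntidiagonal.antidiagonal p.2,
          f ((x.1, y.1), (x.2, y.2)) := by
  rw [show Finset.HasAntidiagonal.antidiagonal p
      = (Finset.HasAntidiagonal.antidiagonal p.1 ×ˢ Finset.HasAntidiagonal.antidiagonal p.2).map
        ⟨fun x => ((x.1.1, x.2.1), (x.1.2, x.2.2)), by
          rintro ⟨⟨a, b⟩, ⟨c, d⟩⟩ ⟨⟨a', b'⟩, ⟨c', d'⟩⟩ h
          simp only [Prod.mk.injEq] at h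
          obtain ⟨⟨h1, h2⟩, h3, h4⟩ := h
          simp_all⟩ from rfl]
  rw [Finset.sum_map, Finset.sum_product]
  rfl

lemma mul_apply' {m : ℕ} (f g : Rm m) (c d : ℕ) :
    (f * g) (c, d) = ∑ a ∈ Finset.range (c + 1), ∑ b ∈ Finset.range (d + 1),
      qvar ^ (m * a * (d - b)) * f (a, b) * g (c - a, d - b) := by
  rw [Rm.mul_def, sum_antidiag]
  rw [Finset.Nat.sum_antidiagonal_eq_sum_range_succ_mk]
  refine Finset.sum_congr rfl fun a _ => ?_
  rw [Finset.Nat.sum_antidiagonal_eq_sum_range_succ_mk]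

lemma dd_mul {m : ℕ} (a b a' b' : ℕ) (v v' : K) :
    (dd a b v : Rm m) * dd a' b' v' = dd (a + a') (b + b') (qvar ^ (m * a * b') * v * v') := by
  funext p
  rw [Rm.mul_def]
  have h : ∀ u ∈ Finset.HasAntidiagonal.antidiagonal p,
      qvar ^ (m * u.1.1 * u.2.2) * (dd a b v : Rm m) u.1 * (dd a' b' v' : Rm m) u.2
        = if u = ((a, b), (a', b')) then qvar ^ (m * a * b') * v * v' else 0 := by
    rintro ⟨u1, u2⟩ _
    by_cases h1 : u1 = (a, b)
    · by_cases h2 : u2 = (a', b')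
      · subst h1; subst h2; simp [dd]
      · have hne : ((u1, u2) : (ℕ × ℕ) × (ℕ × ℕ)) ≠ ((a, b), (a', b')) := by
          simp [h2]
        simp [dd, h2, hne]
    · have hne : ((u1, u2) : (ℕ × ℕ) × (ℕ × ℕ)) ≠ ((a, b), (a', b')) := by
        simp [h1]
      simp [dd, h1, hne]
  rw [Finset.sum_congr rfl h, Finset.sum_ite_eq' _ ((a, b), (a', b')) _]
  simp only [Finset.HasAntidiagonal.mem_antidiagonal]
  show _ = if p = (a + a', b + b') then _ else 0
  by_cases hp : p = (a + a', b + b')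
  · rw [if_pos (by rw [hp]; rfl), if_pos hp]
  · rw [if_neg (by rw [show ((a,b) : ℕ×ℕ) + (a',b') = (a+a', b+b') from rfl]; exact fun hh => hp hh.symm), if_neg hp]

lemma one_eq_dd {m : ℕ} : (1 : Rm m) = dd 0 0 1 := rfl

lemma dd_pow {m : ℕ} (a b : ℕ) (v : K) (n : ℕ) :
    (dd a b v : Rm m) ^ n = dd (n * a) (n * b) (qvar ^ (m * a * b * tri n) * v ^ n) := by
  induction n with
  | zero => simp [one_eq_dd, tri]
  | succ n ih =>
    rw [pow_succ, ih, dd_mul]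
    have h1 : n * a + a = (n + 1) * a := by ring
    have h2 : n * b + b = (n + 1) * b := by ring
    rw [h1, h2]
    have h3 : qvar ^ (m * (n * a) * b) * (qvar ^ (m * a * b * tri n) * v ^ n) * v
        = qvar ^ (m * a * b * tri (n + 1)) * v ^ (n + 1) := by
      rw [show tri (n + 1) = tri n + n from rfl, pow_succ, ← mul_assoc, ← pow_add]
      rw [show m * (n * a) * b + m * a * b * tri n = m * a * b * (tri n + n) from by ring]
      ring
    rw [h3]

lemma xGen_eq {m : ℕ} : (xGen : Rm m) = dd 1 0 1 := rfl
lemma yGen_eq {m : ℕ} : (yGen : Rm m) = dd 0 1 1 := rfl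

lemma w_eq : ((-sqrtq⁻¹) • (xGen * yGen) : Rm 1) = dd 1 1 (-sqrtq) := by
  rw [xGen_eq, yGen_eq, dd_mul]
  funext p
  rw [Rm.smul_apply]
  show -sqrtq⁻¹ * (if p = (1, 1) then qvar ^ (1 * 1 * 1) * 1 * 1 else 0)
      = if p = (1, 1) then -sqrtq else 0
  by_cases hp : p = (1, 1)
  · rw [if_pos hp, if_pos hp]
    rw [pow_one, qvar, pow_two]
    rw [mul_one, mul_one]
    rw [neg_mul, inv_mul_cancel_left₀ sqrtq_ne_zero]
  · rw [if_neg hp, if_neg hp, mul_zero]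

lemma PhiR_dd_apply {m : ℕ} (a b : ℕ) (v : K) (c d : ℕ) :
    PhiR (dd a b v : Rm m) (c, d)
      = ∑ n ∈ Finset.range (c + d + 1),
          (if (c, d) = (n * a, n * b) then phiCoeff n * (qvar ^ (m * a * b * tri n) * v ^ n) else 0) := by
  show (∑ n ∈ Finset.range (c + d + 1), phiCoeff n * ((dd a b v : Rm m) ^ n) (c, d)) = _
  refine Finset.sum_congr rfl fun n _ => ?_
  rw [dd_pow]
  show phiCoeff n * (if ((c, d) : ℕ × ℕ) = (n * a, n * b) then _ else 0) = _
  by_cases hp : ((c, d) : ℕ × ℕ) = (n * a, n * b)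
  · rw [if_pos hp, if_pos hp]
  · rw [if_neg hp, if_neg hp, mul_zero]

lemma PhiR_x_apply {m : ℕ} (c d : ℕ) :
    PhiR (xGen : Rm m) (c, d) = if d = 0 then phiCoeff c else 0 := by
  rw [xGen_eq, PhiR_dd_apply]
  by_cases hd : d = 0
  · subst hd
    rw [if_pos rfl]
    rw [Finset.sum_eq_single c]
    · simp
    · intro n _ hn
      rw [if_neg (by simp [Prod.ext_iff]; omega)]
    · intro habs
      exact absurd (Finset.mem_range.mpr (by omega)) habs
  · rw [if_neg hd]
    apply Finset.sum_eq_zero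
    intro n _
    rw [if_neg (by simp [Prod.ext_iff]; omega)]

lemma PhiR_y_apply {m : ℕ} (c d : ℕ) :
    PhiR (yGen : Rm m) (c, d) = if c = 0 then phiCoeff d else 0 := by
  rw [yGen_eq, PhiR_dd_apply]
  by_cases hc : c = 0
  · subst hc
    rw [if_pos rfl]
    rw [Finset.sum_eq_single d]
    · simp
    · intro n _ hn
      rw [if_neg (by simp [Prod.ext_iff]; omega)]
    · intro habs
      exact absurd (Finset.mem_range.mpr (by omega)) habs
  · rw [if_neg hc]
    apply Finset.sum_eq_zero
    intro n _
    rw [if_neg (by simp [Prod.ext_iff]; omega)]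

lemma PhiR_w_apply (c d : ℕ) :
    PhiR (dd 1 1 (-sqrtq) : Rm 1) (c, d)
      = if c = d then phiCoeff c * (qvar ^ (tri c) * (-sqrtq) ^ c) else 0 := by
  rw [PhiR_dd_apply]
  by_cases hcd : c = d
  · subst hcd
    rw [if_pos rfl]
    rw [Finset.sum_eq_single c]
    · rw [if_pos (by simp)]
      norm_num
    · intro n _ hn
      rw [if_neg (by simp [Prod.ext_iff]; omega)]
    · intro habs
      exact absurd (Finset.mem_range.mpr (by omega)) habs
  · rw [if_neg hcd]
    apply Finset.sum_eq_zero
    intro n _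
    rw [if_neg (by simp [Prod.ext_iff]; omega)]

end Algebra

section Eval
open Rm FiveAux

lemma lhs_apply (c d : ℕ) :
    ((PhiR (xGen : Rm 1) * PhiR yGen : Rm 1)) (c, d) = qvar ^ (c * d) * phiCoeff c * phiCoeff d := by
  rw [mul_apply', Finset.sum_eq_single c]
  · rw [Finset.sum_eq_single 0]
    · rw [PhiR_x_apply, PhiR_y_apply, if_pos rfl, Nat.sub_self, if_pos rfl, Nat.sub_zero,
        one_mul]
    · intro b hb hb0
      rw [PhiR_x_apply, if_neg hb0]
      ring
    · intro habs
      exact absurd (Finset.mem_range.mpr (by omega)) habs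
  · intro a ha hac
    apply Finset.sum_eq_zero
    intro b _
    have ha' := Finset.mem_range.mp ha
    rw [PhiR_y_apply, if_neg (by omega)]
    ring
  · intro habs
    exact absurd (Finset.mem_range.mpr (by omega)) habs

lemma mid_apply (k d : ℕ) :
    ((PhiR (yGen : Rm 1) * PhiR (dd 1 1 (-sqrtq)) : Rm 1)) (k, d)
      = if k ≤ d then phiCoeff (d - k) * (phiCoeff k * (qvar ^ (tri k) * (-sqrtq) ^ k)) else 0 := by
  rw [mul_apply', Finset.sum_eq_single 0]
  · by_cases hkd : k ≤ d
    · rw [if_pos hkd, Finset.sum_eq_single (d - k)]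
      · rw [PhiR_y_apply, if_pos rfl, Nat.sub_zero, PhiR_w_apply,
          if_pos (by omega), show d - (d - k) = k from by omega]
        simp
      · intro b hb hbk
        have hb' := Finset.mem_range.mp hb
        rw [Nat.sub_zero, PhiR_w_apply, if_neg (by omega)]
        ring
      · intro habs
        exact absurd (Finset.mem_range.mpr (by omega)) habs
    · rw [if_neg hkd]
      apply Finset.sum_eq_zero
      intro b hb
      have hb' := Finset.mem_range.mp hb
      rw [Nat.sub_zero, PhiR_w_apply, if_neg (by omega)]
      ring
  · intro a ha ha0
    apply Finset.sum_eq_zero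
    intro b _
    rw [PhiR_y_apply, if_neg ha0]
    ring
  · intro habs
    exact absurd (Finset.mem_range.mpr (by omega)) habs

lemma rhs_apply (c d : ℕ) :
    ((PhiR (yGen : Rm 1) * PhiR (dd 1 1 (-sqrtq)) * PhiR xGen : Rm 1)) (c, d)
      = ∑ a ∈ Finset.range (c + 1),
          (if a ≤ d then phiCoeff (d - a) * (phiCoeff a * (qvar ^ (tri a) * (-sqrtq) ^ a)) else 0)
            * phiCoeff (c - a) := by
  rw [mul_apply']
  refine Finset.sum_congr rfl fun a ha => ?_
  rw [Finset.sum_eq_single d]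
  · rw [PhiR_x_apply, Nat.sub_self, if_pos rfl, mid_apply, Nat.mul_zero, pow_zero, one_mul]
  · intro b hb hbd
    have hb' := Finset.mem_range.mp hb
    rw [PhiR_x_apply, if_neg (by omega)]
    ring
  · intro habs
    exact absurd (Finset.mem_range.mpr (by omega)) habs

lemma star' (c d : ℕ) : (∑ k ∈ Finset.range (c + 1), t c d k) = qvar ^ (c * d) := by
  rcases le_total c d with h | h
  · rw [Finset.sum_subset (Finset.range_subset_range.mpr (show c + 1 ≤ d + 1 by omega))
      (fun x hx hxn => by
        have h1 := Finset.mem_range.mp hx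
        have h2 : c < x := by
          by_contra hc
          exact hxn (Finset.mem_range.mpr (by omega))
        simp [t, B_eq_zero h2])]
    exact star c d
  · rw [← Finset.sum_subset (Finset.range_subset_range.mpr (show d + 1 ≤ c + 1 by omega))
      (fun x hx hxn => by
        have h1 := Finset.mem_range.mp hx
        have h2 : d < x := by
          by_contra hc
          exact hxn (Finset.mem_range.mpr (by omega))
        simp [t, B_eq_zero h2])]
    exact star c d

lemma E_term (c d a : ℕ) (hac : a ≤ c) :
    (if a ≤ d then phiCoeff (d - a) * (phiCoeff a * (qvar ^ (tri a) * (-sqrtq) ^ a)) else 0)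
        * phiCoeff (c - a) * (P c * P d)
      = sqrtq ^ (c + d) * t c d a := by
  by_cases had : a ≤ d
  · rw [if_pos had]
    obtain ⟨u, rfl⟩ : ∃ u, c = a + u := ⟨c - a, by omega⟩
    obtain ⟨w, rfl⟩ : ∃ w, d = a + w := ⟨d - a, by omega⟩
    rw [show a + w - a = w from by omega, show a + u - a = u from by omega]
    rw [← L3 (show a ≤ a + u by omega), ← L3 (show a ≤ a + w by omega)]
    rw [show a + u - a = u from by omega, show a + w - a = w from by omega]
    rw [show ((-sqrtq) ^ a : K) = (-1 : K) ^ a * sqrtq ^ a from by rw [neg_pow]]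
    simp only [phiCoeff_eq, t]
    have h1 := P_ne_zero a
    have h2 := P_ne_zero u
    have h3 := P_ne_zero w
    field_simp
    ring
  · rw [if_neg had]
    simp [t, B_eq_zero (show d < a by omega)]

lemma Emain (c d : ℕ) : qvar ^ (c * d) * phiCoeff c * phiCoeff d
    = ∑ a ∈ Finset.range (c + 1),
        (if a ≤ d then phiCoeff (d - a) * (phiCoeff a * (qvar ^ (tri a) * (-sqrtq) ^ a)) else 0)
          * phiCoeff (c - a) := by
  have hPcd : P c * P d ≠ 0 := mul_ne_zero (P_ne_zero c) (P_ne_zero d)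
  apply mul_right_cancel₀ hPcd
  rw [Finset.sum_mul,
    Finset.sum_congr rfl (fun a ha => E_term c d a (by
      have := Finset.mem_range.mp ha; omega)),
    ← Finset.mul_sum, star']
  rw [phiCoeff_eq, phiCoeff_eq]
  have h1 := P_ne_zero c
  have h2 := P_ne_zero d
  field_simp
  ring

end Eval


open Rm in
/-- **Five-term identity** (Schützenberger; Faddeev–Kashaev; Faddeev–Volkov).
In `R₁`, the model of `K_q[[x,y]]` with `x·y = q·y·x`, the quantum dilogarithm
satisfies `Φ(x)·Φ(y) = Φ(y)·Φ(−q^{−1/2}·x·y)·Φ(x)`. -/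
theorem five_term_identity :
    PhiR (xGen : Rm 1) * PhiR yGen =
      PhiR yGen * PhiR ((-sqrtq⁻¹) • (xGen * yGen)) * PhiR xGen := by
  rw [w_eq]
  funext p
  obtain ⟨c, d⟩ := p
  rw [lhs_apply, rhs_apply]
  exact Emain c d
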